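/- (Semantic security of the partition code.) Let n ≥ 1 and 1 ≤ k ≤ n. Partition {0,1}ⁿ into 2^{n−k} blocks 𝒜_i, each of size 2^k, and consider the code whose encoder maps message i to a uniformly random element of 𝒜_i and whose decoder maps y to the index of the block containing y. Then: (1) over the noiseless channel (Y = X) the decoder is correct with probability 1 for every message; and (2) for every Θ ⊆ {0,1}ⁿ with |Θ| = t and every probability distribution of the message M on the block indices, the mutual information between M and the output Y(Θ) of V_Θ on the encoding of M satisfies I(M;Y(Θ)) ≤ (t/2^k)·(1 + 2^{k−n})·log₂( 2^{n−k}·(1 + 2^{k−n}) ). -/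
import Mathlib


open scoped BigOperators

noncomputable section

/-- A probability distribution on a finite type. -/
def IsProbDist {α : Type} [Fintype α] (p : α → ℝ) : Prop :=
  (∀ a, 0 ≤ p a) ∧ (∑ a, p a) = 1

/-- Output distribution of channel `V` under random encoder `Φ` on message `u`. -/
def Zout {U X Z : Type} [Fintype X] (Φ : U → X → ℝ) (V : X → Z → ℝ) (u : U) (z : Z) : ℝ :=
  ∑ x, Φ u x * V x z

/-- Probability that the decoder `ψ` fails on message `u`. -/
def errProb {U X Y : Type} [Fintype X] [Fintype Y] [DecidableEq U]
    (W : X → Y → ℝ) (Φ : U → X → ℝ) (ψ : Y → U) (u : U) : ℝ :=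
  ∑ y, (if ψ y ≠ u then Zout Φ W u y else 0)

/-- Shannon mutual information in bits (logarithm base 2) of the joint law `p u * q u z`. -/
def mutualInfo2 {U Z : Type} [Fintype U] [Fintype Z] (p : U → ℝ) (q : U → Z → ℝ) : ℝ :=
  ∑ u, ∑ z, p u * q u z * Real.logb 2 (q u z / (∑ v, p v * q v z))

/-- The channel `V_Θ` on `{0,1}ⁿ`: the identity channel on inputs in `Θ` and the completely
noisy (uniform-output) channel on inputs outside `Θ`. -/
def Vtheta (n : ℕ) (Θ : Finset (Fin n → Bool)) (x y : Fin n → Bool) : ℝ :=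
  if x ∈ Θ then (if y = x then 1 else 0) else ((2:ℝ) ^ n)⁻¹

/-- The partition-code encoder: message `i` is mapped to a uniformly random element of the
block `A i`. -/
def partEnc {n m : ℕ} (A : Fin m → Finset (Fin n → Bool)) (k : ℕ)
    (i : Fin m) (x : Fin n → Bool) : ℝ :=
  if x ∈ A i then ((2:ℝ) ^ k)⁻¹ else 0

lemma gibbs {Z : Type} [Fintype Z] (f g : Z → ℝ) (hf : ∀ z, 0 ≤ f z) (hg : ∀ z, 0 < g z)
    (hfs : ∑ z, f z = 1) (hgs : ∑ z, g z = 1) :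
    0 ≤ ∑ z, f z * Real.logb 2 (f z / g z) := by
  have h2 : (0:ℝ) < Real.log 2 := Real.log_pos (by norm_num)
  have key : ∀ z, (f z - g z) / Real.log 2 ≤ f z * Real.logb 2 (f z / g z) := by
    intro z
    rcases eq_or_lt_of_le (hf z) with h0 | h0
    · rw [← h0]
      simp only [zero_mul, zero_sub]
      exact div_nonpos_of_nonpos_of_nonneg (by linarith [(hg z).le]) h2.le
    · have hlog : Real.log (g z / f z) ≤ g z / f z - 1 :=
        Real.log_le_sub_one_of_pos (div_pos (hg z) h0)
      have h1 : 1 - g z / f z ≤ Real.log (f z / g z) := by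
        rw [show f z / g z = (g z / f z)⁻¹ by rw [inv_div], Real.log_inv]; linarith
      have hmul : f z - g z ≤ f z * Real.log (f z / g z) := by
        have h3 := mul_le_mul_of_nonneg_left h1 h0.le
        have h4 : f z * (1 - g z / f z) = f z - g z := by field_simp
        linarith
      rw [Real.logb, ← mul_div_assoc]
      exact div_le_div_of_nonneg_right hmul h2.le
  calc (0:ℝ) = ∑ z, (f z - g z) / Real.log 2 := by
        rw [← Finset.sum_div, Finset.sum_sub_distrib, hfs, hgs]; simp
    _ ≤ _ := Finset.sum_le_sum (fun z _ => key z)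

/-- **Statement 16 (Semantic security of the partition code).** Partition `{0,1}ⁿ` into
`2^{n−k}` blocks of size `2^k`; encode message `i` as a uniform element of block `𝒜_i` and
decode `y` to the index of its block. Then (1) over the noiseless channel the decoder is
always correct, and (2) for every `Θ` with `|Θ| = t` and every message distribution,
`I(M;Y(Θ)) ≤ (t/2^k)·(1 + 2^{k−n})·log₂( 2^{n−k}·(1 + 2^{k−n}) )`. -/
theorem partition_code_semantically_secure (n k : ℕ) (hk1 : 1 ≤ k) (hkn : k ≤ n)
    (A : Fin (2 ^ (n - k)) → Finset (Fin n → Bool))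
    (hcard : ∀ i, (A i).card = 2 ^ k)
    (hdisj : ∀ i j, i ≠ j → Disjoint (A i) (A j))
    (hcover : ∀ x, ∃ i, x ∈ A i)
    (dec : (Fin n → Bool) → Fin (2 ^ (n - k)))
    (hdec : ∀ i x, x ∈ A i → dec x = i) :
    (∀ i, errProb (fun x y : Fin n → Bool => if y = x then (1:ℝ) else 0)
        (partEnc A k) dec i = 0) ∧
    (∀ (Θ : Finset (Fin n → Bool)) (p : Fin (2 ^ (n - k)) → ℝ), IsProbDist p →
      mutualInfo2 p (fun i => Zout (partEnc A k) (Vtheta n Θ) i)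
        ≤ ((Θ.card : ℝ) / 2 ^ k) * (1 + (2:ℝ) ^ k / 2 ^ n) *
            Real.logb 2 (((2:ℝ) ^ n / 2 ^ k) * (1 + (2:ℝ) ^ k / 2 ^ n))) := by
  have hkpos : (0:ℝ) < 2 ^ k := by positivity
  have hnpos : (0:ℝ) < 2 ^ n := by positivity
  have hkn' : (2:ℝ) ^ k ≤ 2 ^ n := by
    exact_mod_cast pow_le_pow_right₀ (by norm_num : (1:ℝ) ≤ 2) hkn
  constructor
  · -- Part 1: zero error over the noiseless channel
    intro i
    apply Finset.sum_eq_zero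
    intro y _
    by_cases h : dec y = i
    · simp [h]
    · simp only [ne_eq, h, not_false_iff, if_true]
      apply Finset.sum_eq_zero
      intro x _
      by_cases hxy : y = x
      · subst hxy
        have : y ∉ A i := fun hy => h (hdec i y hy)
        simp [partEnc, this]
      · simp [hxy]
  · -- Part 2
    intro Θ p hp
    set c : ℝ := ((2:ℝ) ^ k)⁻¹ with hc
    set r : ℝ := ((2:ℝ) ^ n)⁻¹ with hr
    have hcpos : 0 < c := by positivity
    have hrpos : 0 < r := by positivity
    set q : Fin (2 ^ (n - k)) → (Fin n → Bool) → ℝ :=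
      fun i => Zout (partEnc A k) (Vtheta n Θ) i with hq
    set M : ℝ := c * (1 + (2:ℝ) ^ k / 2 ^ n) with hM
    set L : ℝ := Real.logb 2 (((2:ℝ) ^ n / 2 ^ k) * (1 + (2:ℝ) ^ k / 2 ^ n)) with hL
    have hMpos : 0 < M := by
      rw [hM]; positivity
    -- closed form for q
    have qeq : ∀ i z, q i z =
        c * ((if z ∈ A i ∩ Θ then 1 else 0) + ((A i \ Θ).card : ℝ) * r) := by
      intro i z
      rw [hq]
      unfold Zout partEnc
      simp only [ite_mul, zero_mul]
      rw [Finset.sum_ite_mem, Finset.univ_inter, ← Finset.mul_sum]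
      congr 1
      rw [← Finset.sum_inter_add_sum_sdiff (A i) Θ (fun x => Vtheta n Θ x z)]
      congr 1
      · calc ∑ x ∈ A i ∩ Θ, Vtheta n Θ x z
            = ∑ x ∈ A i ∩ Θ, (if z = x then (1:ℝ) else 0) := by
              apply Finset.sum_congr rfl
              intro x hx
              simp [Vtheta, (Finset.mem_inter.1 hx).2]
          _ = if z ∈ A i ∩ Θ then 1 else 0 := Finset.sum_ite_eq (A i ∩ Θ) z (fun _ => (1:ℝ))
      · calc ∑ x ∈ A i \ Θ, Vtheta n Θ x z
            = ∑ _x ∈ A i \ Θ, r := by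
              apply Finset.sum_congr rfl
              intro x hx
              simp [Vtheta, (Finset.mem_sdiff.1 hx).2, hr]
          _ = ((A i \ Θ).card : ℝ) * r := by rw [Finset.sum_const, nsmul_eq_mul]
    have qnonneg : ∀ i z, 0 ≤ q i z := by
      intro i z
      rw [qeq]
      have : (0:ℝ) ≤ (if z ∈ A i ∩ Θ then (1:ℝ) else 0) := by positivity
      positivity
    have qsum : ∀ i, ∑ z, q i z = 1 := by
      intro i
      rw [hq]
      unfold Zout
      rw [Finset.sum_comm]
      have hrow : ∀ x, ∑ z, partEnc A k i x * Vtheta n Θ x z = partEnc A k i x := by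
        intro x
        rw [← Finset.mul_sum]
        have : ∑ z, Vtheta n Θ x z = 1 := by
          unfold Vtheta
          by_cases hx : x ∈ Θ
          · simp [hx]
          · simp only [hx, if_false]
            rw [Finset.sum_const, nsmul_eq_mul, Finset.card_univ]
            have : Fintype.card (Fin n → Bool) = 2 ^ n := by simp [Fintype.card_fun]
            rw [this]
            push_cast
            field_simp
        rw [this, mul_one]
      rw [Finset.sum_congr rfl (fun x _ => hrow x)]
      unfold partEnc
      rw [Finset.sum_ite_mem, Finset.univ_inter, Finset.sum_const, nsmul_eq_mul, hcard]
      push_cast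
      field_simp
    -- q small off the block∩Θ
    have qsmall : ∀ i z, z ∉ A i ∩ Θ → q i z ≤ r := by
      intro i z hz
      rw [qeq, if_neg hz, zero_add]
      have h1 : ((A i \ Θ).card : ℝ) ≤ 2 ^ k := by
        have := Finset.card_le_card (Finset.sdiff_subset (s := A i) (t := Θ))
        rw [hcard] at this
        exact_mod_cast this
      calc c * (((A i \ Θ).card : ℝ) * r) ≤ c * ((2:ℝ) ^ k * r) := by
            apply mul_le_mul_of_nonneg_left (mul_le_mul_of_nonneg_right h1 hrpos.le) hcpos.le
        _ = r := by rw [hc]; field_simp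
    have qleM : ∀ i z, q i z ≤ M := by
      intro i z
      rw [qeq, hM]
      apply mul_le_mul_of_nonneg_left _ hcpos.le
      have h1 : ((A i \ Θ).card : ℝ) * r ≤ (2:ℝ) ^ k / 2 ^ n := by
        have := Finset.card_le_card (Finset.sdiff_subset (s := A i) (t := Θ))
        rw [hcard] at this
        have h2 : ((A i \ Θ).card : ℝ) ≤ 2 ^ k := by exact_mod_cast this
        rw [hr, div_eq_mul_inv]
        exact mul_le_mul_of_nonneg_right h2 hrpos.le
      have h0 : (if z ∈ A i ∩ Θ then (1:ℝ) else 0) ≤ 1 := by split <;> norm_num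
      linarith
    have qposOn : ∀ i z, z ∈ A i ∩ Θ → 0 < q i z := by
      intro i z hz
      rw [qeq, if_pos hz]
      have : (0:ℝ) ≤ ((A i \ Θ).card : ℝ) * r := by positivity
      have := hcpos
      nlinarith
    -- qbar
    set qbar : (Fin n → Bool) → ℝ := fun z => ∑ v, p v * q v z with hqbar
    have qbar_nonneg : ∀ z, 0 ≤ qbar z :=
      fun z => Finset.sum_nonneg fun v _ => mul_nonneg (hp.1 v) (qnonneg v z)
    have qbar_sum : ∑ z, qbar z = 1 := by
      rw [hqbar, Finset.sum_comm]
      calc ∑ v, ∑ z, p v * q v z = ∑ v, p v := by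
            apply Finset.sum_congr rfl
            intro v _
            rw [← Finset.mul_sum, qsum, mul_one]
        _ = 1 := hp.2
    have rsum : ∑ _z : Fin n → Bool, r = 1 := by
      rw [Finset.sum_const, nsmul_eq_mul, Finset.card_univ]
      have : Fintype.card (Fin n → Bool) = 2 ^ n := by simp [Fintype.card_fun]
      rw [this, hr]
      push_cast
      field_simp
    -- Step 1: decomposition
    have hdecomp : mutualInfo2 p q =
        (∑ i, ∑ z, p i * q i z * Real.logb 2 (q i z / r))
          - ∑ z, qbar z * Real.logb 2 (qbar z / r) := by
      unfold mutualInfo2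
      have h2 : ∑ z, qbar z * Real.logb 2 (qbar z / r)
          = ∑ i, ∑ z, p i * q i z * Real.logb 2 (qbar z / r) := by
        rw [Finset.sum_comm]
        apply Finset.sum_congr rfl
        intro z _
        rw [hqbar, Finset.sum_mul]
      rw [h2, ← Finset.sum_sub_distrib]
      apply Finset.sum_congr rfl
      intro i _
      rw [← Finset.sum_sub_distrib]
      apply Finset.sum_congr rfl
      intro z _
      rcases eq_or_lt_of_le (hp.1 i) with h0 | h0
      · rw [← h0]; ring
      rcases eq_or_lt_of_le (qnonneg i z) with hq0 | hq0
      · rw [← hq0]; ring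
      have hqb : 0 < qbar z := by
        have hle : p i * q i z ≤ qbar z := by
          rw [hqbar]
          exact Finset.single_le_sum
            (fun v _ => mul_nonneg (hp.1 v) (qnonneg v z)) (Finset.mem_univ i)
        nlinarith
      have e1 : Real.logb 2 (q i z / qbar z) = Real.logb 2 (q i z) - Real.logb 2 (qbar z) :=
        Real.logb_div hq0.ne' hqb.ne'
      have e2 : Real.logb 2 (q i z / r) = Real.logb 2 (q i z) - Real.logb 2 r :=
        Real.logb_div hq0.ne' hrpos.ne'
      have e3 : Real.logb 2 (qbar z / r) = Real.logb 2 (qbar z) - Real.logb 2 r :=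
        Real.logb_div hqb.ne' hrpos.ne'
      rw [e1, e2, e3]
      ring
    -- Step 2: Gibbs
    have hgibbs : 0 ≤ ∑ z, qbar z * Real.logb 2 (qbar z / r) :=
      gibbs qbar (fun _ => r) qbar_nonneg (fun _ => hrpos) qbar_sum rsum
    -- Step 3: per-message bound
    have hrc : r ≤ c := by
      rw [hr, hc]
      exact inv_anti₀ hkpos hkn'
    have hrM : r ≤ M := by
      have : c ≤ M := by
        rw [hM]
        nlinarith [hcpos, div_nonneg (le_of_lt hkpos) (le_of_lt hnpos)]
      linarith
    have hML : Real.logb 2 (M / r) = L := by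
      rw [hL]
      congr 1
      rw [hM, hc, hr]
      field_simp
    have hLnonneg : 0 ≤ L := by
      rw [← hML]
      exact Real.logb_nonneg (by norm_num) ((one_le_div hrpos).2 hrM)
    have hstep3 : ∀ i, ∑ z, q i z * Real.logb 2 (q i z / r)
        ≤ ((Θ.card : ℝ) / 2 ^ k) * (1 + (2:ℝ) ^ k / 2 ^ n) * L := by
      intro i
      rw [← Finset.sum_sdiff (Finset.subset_univ (A i ∩ Θ)), add_comm]
      have h2 : ∑ z ∈ Finset.univ \ (A i ∩ Θ), q i z * Real.logb 2 (q i z / r) ≤ 0 := by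
        apply Finset.sum_nonpos
        intro z hz
        have hz' : z ∉ A i ∩ Θ := (Finset.mem_sdiff.1 hz).2
        rcases eq_or_lt_of_le (qnonneg i z) with h0 | h0
        · rw [← h0]; simp
        · have hle : q i z / r ≤ 1 := (div_le_one hrpos).2 (qsmall i z hz')
          have hlog : Real.logb 2 (q i z / r) ≤ 0 :=
            Real.logb_nonpos (by norm_num) (by positivity) hle
          exact mul_nonpos_of_nonneg_of_nonpos h0.le hlog
      have h1 : ∑ z ∈ A i ∩ Θ, q i z * Real.logb 2 (q i z / r)
          ≤ ((A i ∩ Θ).card : ℝ) * (M * L) := by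
        calc ∑ z ∈ A i ∩ Θ, q i z * Real.logb 2 (q i z / r)
            ≤ ∑ _z ∈ A i ∩ Θ, M * L := by
              apply Finset.sum_le_sum
              intro z hz
              have hqz := qposOn i z hz
              have hqr : r ≤ q i z := by
                have : c ≤ q i z := by
                  rw [qeq, if_pos hz]
                  have h5 : (0:ℝ) ≤ ((A i \ Θ).card : ℝ) * r := by positivity
                  nlinarith [hcpos]
                linarith
              have hlogn : 0 ≤ Real.logb 2 (q i z / r) :=
                Real.logb_nonneg (by norm_num) ((one_le_div hrpos).2 hqr)
              have hlog : Real.logb 2 (q i z / r) ≤ L := by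
                rw [← hML]
                have : q i z / r ≤ M / r := by gcongr; exact qleM i z
                exact Real.logb_le_logb_of_le (by norm_num) (by positivity) this
              exact mul_le_mul (qleM i z) hlog hlogn hMpos.le
          _ = ((A i ∩ Θ).card : ℝ) * (M * L) := by rw [Finset.sum_const, nsmul_eq_mul]
      have hcardle : ((A i ∩ Θ).card : ℝ) ≤ (Θ.card : ℝ) := by
        exact_mod_cast Finset.card_le_card (Finset.inter_subset_right)
      calc ∑ z ∈ A i ∩ Θ, q i z * Real.logb 2 (q i z / r)
            + ∑ z ∈ Finset.univ \ (A i ∩ Θ), q i z * Real.logb 2 (q i z / r)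
          ≤ ((A i ∩ Θ).card : ℝ) * (M * L) + 0 := add_le_add h1 h2
        _ ≤ (Θ.card : ℝ) * (M * L) := by
            rw [add_zero]
            exact mul_le_mul_of_nonneg_right hcardle (mul_nonneg hMpos.le hLnonneg)
        _ = ((Θ.card : ℝ) / 2 ^ k) * (1 + (2:ℝ) ^ k / 2 ^ n) * L := by
            rw [hM, hc]
            ring
    calc mutualInfo2 p q
        = (∑ i, ∑ z, p i * q i z * Real.logb 2 (q i z / r))
            - ∑ z, qbar z * Real.logb 2 (qbar z / r) := hdecomp
      _ ≤ ∑ i, ∑ z, p i * q i z * Real.logb 2 (q i z / r) := by linarith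
      _ = ∑ i, p i * ∑ z, q i z * Real.logb 2 (q i z / r) := by
          apply Finset.sum_congr rfl
          intro i _
          rw [Finset.mul_sum]
          apply Finset.sum_congr rfl
          intro z _
          ring
      _ ≤ ∑ i, p i * (((Θ.card : ℝ) / 2 ^ k) * (1 + (2:ℝ) ^ k / 2 ^ n) * L) :=
          Finset.sum_le_sum fun i _ => mul_le_mul_of_nonneg_left (hstep3 i) (hp.1 i)
      _ = ((Θ.card : ℝ) / 2 ^ k) * (1 + (2:ℝ) ^ k / 2 ^ n) * L := by
          rw [← Finset.sum_mul, hp.2, one_mul]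

end
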